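/- For k > 0, the exponentiated isochoric Hencky energy W_k : GL⁺(2) → ℝ defined by W_k(F) = exp( (k/2)·(log(K(F) + √(K(F)² − 1)))² ), where K(F) = ‖F‖²/(2·det F) with the Frobenius norm, is rank-one convex on GL⁺(2) if and only if k ≥ 1/4, and is polyconvex on GL⁺(2) if and only if k ≥ 1/4. -/

import Mathlib

/-!
Write `W_k(F) = h(λ₁²/det F)` with `h(t) = exp((k/2) log² t)` and `λ₁` the largest singular
value. `λ₁` is convex (a sum of norms of linear images of `F`) and `(x, d) ↦ x²/d` is jointly
convex and increasing in `x ≥ 0`, so `(F, d) ↦ λ₁(F)²/d` is convex on `d > 0`. For `k ≥ 1/4`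
the profile `h` is convex and increasing on `[1, ∞)`, which makes `W_k` polyconvex, hence
rank-one convex. Conversely, along the rank-one line `t ↦ diag(t, 1)` one has `W_k = h(t)`, and
`h''(t)` has the sign of `k log² t - log t + 1`, which is negative at `log t = 1/(2k)` when
`k < 1/4`.
-/

open Matrix Set

noncomputable section

/-- The space of real 2×2 matrices. -/
abbrev Mat2 : Type := Matrix (Fin 2) (Fin 2) ℝ

/-- The special orthogonal group SO(2): orthogonal 2×2 matrices with determinant 1. -/
def SO2 : Set Mat2 := {Q : Mat2 | Qᵀ * Q = 1 ∧ Q.det = 1}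

/-- A function `W` (viewed on GL⁺(2) = {F | 0 < det F}) is polyconvex if there is a
convex function `P : ℝ^{2×2} × ℝ → ℝ ∪ {+∞}` with `W F = P (F, det F)` on GL⁺(2). -/
def Polyconvex (W : Mat2 → ℝ) : Prop :=
  ∃ P : Mat2 × ℝ → EReal,
    (∀ x y : Mat2 × ℝ, ∀ a b : ℝ, 0 ≤ a → 0 ≤ b → a + b = 1 →
      P (a • x + b • y) ≤ (a : EReal) * P x + (b : EReal) * P y) ∧
    (∀ F : Mat2, 0 < F.det → (W F : EReal) = P (F, F.det))

/-- Rank-one convexity of `W` on GL⁺(2): convexity along rank-one line segments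
lying in GL⁺(2). -/
def RankOneConvex (W : Mat2 → ℝ) : Prop :=
  ∀ F : Mat2, 0 < F.det → ∀ ξ η : Fin 2 → ℝ, ∀ θ : ℝ, θ ∈ Set.Icc (0:ℝ) 1 →
    (∀ t ∈ Set.Icc (0:ℝ) 1, 0 < (F + t • vecMulVec ξ η).det) →
    W (F + (1 - θ) • vecMulVec ξ η) ≤ θ * W F + (1 - θ) * W (F + vecMulVec ξ η)

/-- Objectivity and isotropy: bi-SO(2)-invariance on GL⁺(2). -/
def ObjectiveIsotropic (W : Mat2 → ℝ) : Prop :=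
  ∀ F : Mat2, 0 < F.det → ∀ Q₁ Q₂ : Mat2, Q₁ ∈ SO2 → Q₂ ∈ SO2 →
    W (Q₁ * F * Q₂) = W F

/-- Isochoric: invariance under positive scaling on GL⁺(2). -/
def Isochoric (W : Mat2 → ℝ) : Prop :=
  ∀ F : Mat2, 0 < F.det → ∀ a : ℝ, 0 < a → W (a • F) = W F

/-- The 2×2 diagonal matrix diag(a, b). -/
def diag2 (a b : ℝ) : Mat2 := !![a, 0; 0, b]

/-- The squared Frobenius norm of a 2×2 matrix. -/
def frobSq (F : Mat2) : ℝ := ∑ i, ∑ j, (F i j) ^ 2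

/-- The operator norm of `F` induced by the Euclidean norm on ℝ²:
the supremum of ‖F·x‖ over Euclidean-unit vectors x. -/
def opNorm2 (F : Mat2) : ℝ :=
  sSup {r : ℝ | ∃ x : Fin 2 → ℝ, (x 0) ^ 2 + (x 1) ^ 2 = 1 ∧
    r = Real.sqrt ((F.mulVec x 0) ^ 2 + (F.mulVec x 1) ^ 2)}

/-- The planar distortion `K(F) = ‖F‖²/(2 det F)`. -/
def distortionK (F : Mat2) : ℝ := frobSq F / (2 * F.det)


open Real

def henckyProfile (k t : ℝ) : ℝ := exp (k / 2 * log t ^ 2)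

def henckyProfileDeriv (k t : ℝ) : ℝ := k * henckyProfile k t * log t / t

lemma hasDerivAt_henckyProfile (k : ℝ) {t : ℝ} (ht : 0 < t) :
    HasDerivAt (henckyProfile k) (henckyProfileDeriv k t) t := by
  have := (((hasDerivAt_log ht.ne').pow 2).const_mul (k / 2)).exp
  refine this.congr_deriv ?_
  simp only [henckyProfileDeriv, henckyProfile, Pi.pow_apply]
  field_simp
  ring

lemma hasDerivAt_henckyProfileDeriv (k : ℝ) {t : ℝ} (ht : 0 < t) :
    HasDerivAt (henckyProfileDeriv k)
      (k * henckyProfile k t * (k * log t ^ 2 - log t + 1) / t ^ 2) t := by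
  have := (((hasDerivAt_henckyProfile k ht).const_mul k).mul (hasDerivAt_log ht.ne')).div
    (hasDerivAt_id t) ht.ne'
  refine this.congr_deriv ?_
  simp only [henckyProfileDeriv, id, Pi.mul_apply]
  field_simp
  ring

lemma monotoneOn_henckyProfile {k : ℝ} (hk : 0 ≤ k) : MonotoneOn (henckyProfile k) (Ici 1) := by
  intro s hs t ht hst
  have hs0 : 0 ≤ log s := log_nonneg hs
  unfold henckyProfile
  gcongr
  linarith [mem_Ici.1 hs]

lemma ConvexOn.hasDerivAt2_nonneg {S : Set ℝ} {f f' : ℝ → ℝ} {x f'' : ℝ}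
    (hf : ConvexOn ℝ S f) (hS : IsOpen S) (hf' : ∀ y ∈ S, HasDerivAt f (f' y) y) (hx : x ∈ S)
    (hf'' : HasDerivAt f' f'' x) : 0 ≤ f'' := by
  have hmono : MonotoneOn f' S :=
    (hf.monotoneOn_deriv fun y hy ↦ (hf' y hy).differentiableAt).congr
      (deriv_eqOn hS fun y hy ↦ (hf' y hy).hasDerivWithinAt)
  have := hmono.derivWithin_nonneg (x := x)
  rwa [derivWithin_of_isOpen hS hx, hf''.deriv] at this

lemma convexOn_henckyProfile_iff {k : ℝ} (hk : 0 < k) :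
    ConvexOn ℝ (Ici 1) (henckyProfile k) ↔ 1 / 4 ≤ k := by
  constructor
  · intro hconv
    -- the factor `k u² - u + 1` of the second derivative, `u = log t`, is minimal at `u = 1/(2k)`
    set t₀ := exp (1 / (2 * k))
    have ht₀ : 1 < t₀ := one_lt_exp_iff.2 (by positivity)
    have h := (hconv.subset Ioi_subset_Ici_self (convex_Ioi 1)).hasDerivAt2_nonneg
      isOpen_Ioi (fun y hy ↦ hasDerivAt_henckyProfile k (zero_lt_one.trans hy)) ht₀
      (hasDerivAt_henckyProfileDeriv k (zero_lt_one.trans ht₀))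
    have hpos : 0 < k * henckyProfile k t₀ / t₀ ^ 2 := by
      unfold henckyProfile; positivity
    have hfactor : 0 ≤ k * log t₀ ^ 2 - log t₀ + 1 := by
      rw [mul_div_right_comm] at h
      exact (mul_nonneg_iff_of_pos_left hpos).1 h
    rw [log_exp] at hfactor
    field_simp at hfactor
    linarith
  · intro hk4
    refine convexOn_of_hasDerivWithinAt2_nonneg (f' := henckyProfileDeriv k)
      (f'' := fun t ↦ k * henckyProfile k t * (k * log t ^ 2 - log t + 1) / t ^ 2) (convex_Ici 1)
      (fun t ht ↦ (hasDerivAt_henckyProfile k (zero_lt_one.trans_le ht)).continuousAt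
        |>.continuousWithinAt) (fun t ht ↦ ?_) (fun t ht ↦ ?_) (fun t _ ↦ ?_)
    · exact (hasDerivAt_henckyProfile k
        (zero_lt_one.trans (interior_Ici.subset ht))).hasDerivWithinAt
    · exact (hasDerivAt_henckyProfileDeriv k
        (zero_lt_one.trans (interior_Ici.subset ht))).hasDerivWithinAt
    · have : 0 ≤ k * log t ^ 2 - log t + 1 := by nlinarith [sq_nonneg (2 * k * log t - 1)]
      unfold henckyProfile
      positivity

def conformalPart : Mat2 →ₗ[ℝ] ℂ where
  toFun F := ⟨F 0 0 + F 1 1, F 1 0 - F 0 1⟩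
  map_add' X Y := by apply Complex.ext <;> simp <;> ring
  map_smul' c X := by apply Complex.ext <;> simp <;> ring

def anticonformalPart : Mat2 →ₗ[ℝ] ℂ where
  toFun F := ⟨F 0 0 - F 1 1, F 1 0 + F 0 1⟩
  map_add' X Y := by apply Complex.ext <;> simp <;> ring
  map_smul' c X := by apply Complex.ext <;> simp <;> ring

lemma frobSq_eq (F : Mat2) : frobSq F = F 0 0 ^ 2 + F 0 1 ^ 2 + F 1 0 ^ 2 + F 1 1 ^ 2 := by
  simp only [frobSq, Fin.sum_univ_two]
  ring

lemma norm_conformalPart_sq (F : Mat2) : ‖conformalPart F‖ ^ 2 = frobSq F + 2 * F.det := by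
  rw [Complex.sq_norm, Complex.normSq_apply, frobSq_eq, det_fin_two]
  simp only [conformalPart, LinearMap.coe_mk, AddHom.coe_mk]
  ring

lemma norm_anticonformalPart_sq (F : Mat2) :
    ‖anticonformalPart F‖ ^ 2 = frobSq F - 2 * F.det := by
  rw [Complex.sq_norm, Complex.normSq_apply, frobSq_eq, det_fin_two]
  simp only [anticonformalPart, LinearMap.coe_mk, AddHom.coe_mk]
  ring

/-- The largest singular value of `F`: identifying `ℝ²` with `ℂ`, `F x = z x + w x̄` with
`2z = conformalPart F`, `2w = anticonformalPart F`, and the singular values are `|z| ± |w|`. -/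
def maxSingularValue (F : Mat2) : ℝ := (‖conformalPart F‖ + ‖anticonformalPart F‖) / 2

lemma maxSingularValue_nonneg (F : Mat2) : 0 ≤ maxSingularValue F := by
  unfold maxSingularValue; positivity

lemma convexOn_maxSingularValue : ConvexOn ℝ univ maxSingularValue := by
  have h := (((convexOn_norm convex_univ).comp_linearMap conformalPart).add
    ((convexOn_norm convex_univ).comp_linearMap anticonformalPart)).smul (c := (1 / 2 : ℝ))
    (by norm_num)
  rw [preimage_univ] at h
  refine h.congr fun F _ ↦ ?_
  simp only [maxSingularValue, Pi.add_apply, Function.comp_apply, smul_eq_mul]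
  ring

lemma maxSingularValue_sq_div_det {F : Mat2} (hF : 0 < F.det) :
    maxSingularValue F ^ 2 / F.det = distortionK F + √(distortionK F ^ 2 - 1) := by
  set p := ‖conformalPart F‖
  set q := ‖anticonformalPart F‖
  have hp : p ^ 2 = frobSq F + 2 * F.det := norm_conformalPart_sq F
  have hq : q ^ 2 = frobSq F - 2 * F.det := norm_anticonformalPart_sq F
  have hdisc : distortionK F ^ 2 - 1 = (p * q / (2 * F.det)) ^ 2 := by
    rw [distortionK, div_pow, div_pow, mul_pow p q, hp, hq]
    field_simp
    ring
  rw [hdisc, sqrt_sq (by positivity), maxSingularValue, distortionK]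
  field_simp
  nlinarith [hp, hq]

lemma one_le_maxSingularValue_sq_div_det {F : Mat2} (hF : 0 < F.det) :
    1 ≤ maxSingularValue F ^ 2 / F.det := by
  have hp := norm_conformalPart_sq F
  have hq := norm_anticonformalPart_sq F
  rw [le_div_iff₀ hF, maxSingularValue]
  nlinarith [norm_nonneg (conformalPart F), norm_nonneg (anticonformalPart F),
    mul_nonneg (norm_nonneg (conformalPart F)) (norm_nonneg (anticonformalPart F))]

lemma det_diag2 (a b : ℝ) : (diag2 a b).det = a * b := by
  simp [diag2, det_fin_two]

lemma maxSingularValue_diag2 {t : ℝ} (ht : 1 ≤ t) : maxSingularValue (diag2 t 1) = t := by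
  simp only [maxSingularValue, conformalPart, anticonformalPart, diag2, LinearMap.coe_mk,
    AddHom.coe_mk, of_apply, cons_val', cons_val_zero, cons_val_one, empty_val',
    cons_val_fin_one, sub_zero, add_zero, ← Complex.ofReal_def,
    Complex.norm_real, norm_eq_abs]
  rw [abs_of_nonneg (by linarith), abs_of_nonneg (by linarith)]
  ring

def henckyEnergy (k : ℝ) (F : Mat2) : ℝ :=
  henckyProfile k (distortionK F + √(distortionK F ^ 2 - 1))

lemma henckyEnergy_eq {k : ℝ} {F : Mat2} (hF : 0 < F.det) :
    henckyEnergy k F = henckyProfile k (maxSingularValue F ^ 2 / F.det) := by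
  rw [henckyEnergy, maxSingularValue_sq_div_det hF]

lemma henckyEnergy_diag2 (k : ℝ) {t : ℝ} (ht : 1 ≤ t) :
    henckyEnergy k (diag2 t 1) = henckyProfile k t := by
  rw [henckyEnergy_eq (by rw [det_diag2]; linarith), maxSingularValue_diag2 ht, det_diag2]
  field_simp

section ExtendByTop

variable {α : Type*} {s : Set α}

open Classical in
def extendByTop (s : Set α) (f : α → ℝ) (x : α) : EReal := if x ∈ s then f x else ⊤

lemma extendByTop_of_mem (f : α → ℝ) {x : α} (hx : x ∈ s) : extendByTop s f x = f x :=
  if_pos hx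

lemma extendByTop_of_notMem (f : α → ℝ) {x : α} (hx : x ∉ s) : extendByTop s f x = ⊤ :=
  if_neg hx

lemma coe_mul_extendByTop_ne_bot (f : α → ℝ) (x : α) {a : ℝ} (ha : 0 < a) :
    (a : EReal) * extendByTop s f x ≠ ⊥ := by
  by_cases hx : x ∈ s
  · simp [extendByTop_of_mem f hx, ← EReal.coe_mul]
  · simp [extendByTop_of_notMem f hx, EReal.coe_mul_top_of_pos ha]

end ExtendByTop

section ConvexAnalysis

variable {E : Type*} [AddCommGroup E] [Module ℝ E]

lemma sq_add_div_add_le {a b p q x y : ℝ} (ha : 0 < a) (hb : 0 < b) (hx : 0 < x) (hy : 0 < y) :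
    (a * p + b * q) ^ 2 / (a * x + b * y) ≤ a * (p ^ 2 / x) + b * (q ^ 2 / y) := by
  have := Finset.sq_sum_div_le_sum_sq_div Finset.univ ![a * p, b * q] (g := ![a * x, b * y])
    (by simp [Fin.forall_fin_two]; exact ⟨by positivity, by positivity⟩)
  simp only [Fin.sum_univ_two, Matrix.cons_val_zero, Matrix.cons_val_one] at this
  refine this.trans_eq ?_
  field_simp

lemma ConvexOn.sq_div {s : Set E} {f : E → ℝ} (hf : ConvexOn ℝ s f) (hf₀ : ∀ x ∈ s, 0 ≤ f x) :
    ConvexOn ℝ (s ×ˢ Ioi 0) fun p ↦ f p.1 ^ 2 / p.2 := by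
  refine convexOn_iff_forall_pos.2 ⟨hf.1.prod (convex_Ioi 0), ?_⟩
  rintro ⟨x, dx⟩ ⟨hx, hdx⟩ ⟨y, dy⟩ ⟨hy, hdy⟩ a b ha hb hab
  simp only [Prod.smul_mk, Prod.mk_add_mk, smul_eq_mul, mem_Ioi] at *
  have hcomb : f (a • x + b • y) ≤ a * f x + b * f y := hf.2 hx hy ha.le hb.le hab
  calc f (a • x + b • y) ^ 2 / (a * dx + b * dy)
      ≤ (a * f x + b * f y) ^ 2 / (a * dx + b * dy) := by
        gcongr
        exact hf₀ _ (hf.1 hx hy ha.le hb.le hab)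
    _ ≤ a * (f x ^ 2 / dx) + b * (f y ^ 2 / dy) := sq_add_div_add_le ha hb hdx hdy

lemma ConvexOn.comp_of_mapsTo {s : Set E} {t : Set ℝ} {f : E → ℝ} {g : ℝ → ℝ}
    (hg : ConvexOn ℝ t g) (hg' : MonotoneOn g t) (hf : ConvexOn ℝ s f) (hst : MapsTo f s t) :
    ConvexOn ℝ s (g ∘ f) := by
  refine ⟨hf.1, fun x hx y hy a b ha hb hab ↦ ?_⟩
  calc g (f (a • x + b • y)) ≤ g (a • f x + b • f y) :=
        hg' (hst (hf.1 hx hy ha hb hab)) (hg.1 (hst hx) (hst hy) ha hb hab) (hf.2 hx hy ha hb hab)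
    _ ≤ a • g (f x) + b • g (f y) := hg.2 (hst hx) (hst hy) ha hb hab

lemma ConvexOn.extendByTop_le {s : Set E} {f : E → ℝ} (hf : ConvexOn ℝ s f) (x y : E) {a b : ℝ}
    (ha : 0 ≤ a) (hb : 0 ≤ b) (hab : a + b = 1) :
    extendByTop s f (a • x + b • y) ≤ a * extendByTop s f x + b * extendByTop s f y := by
  rcases ha.eq_or_lt with rfl | ha
  · obtain rfl : b = 1 := by linarith
    simp
  rcases hb.eq_or_lt with rfl | hb
  · obtain rfl : a = 1 := by linarith
    simp
  by_cases hxy : x ∈ s ∧ y ∈ s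
  · rw [extendByTop_of_mem f hxy.1, extendByTop_of_mem f hxy.2,
      extendByTop_of_mem f (hf.1 hxy.1 hxy.2 ha.le hb.le hab)]
    exact_mod_cast hf.2 hxy.1 hxy.2 ha.le hb.le hab
  rcases not_and_or.1 hxy with hx | hy
  · rw [extendByTop_of_notMem f hx, EReal.coe_mul_top_of_pos ha,
      EReal.top_add_of_ne_bot (coe_mul_extendByTop_ne_bot f y hb)]
    exact le_top
  · rw [extendByTop_of_notMem f hy, EReal.coe_mul_top_of_pos hb,
      EReal.add_top_of_ne_bot (coe_mul_extendByTop_ne_bot f x ha)]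
    exact le_top

end ConvexAnalysis

lemma Polyconvex.of_convexOn {W : Mat2 → ℝ} {Φ : Mat2 × ℝ → ℝ}
    (hΦ : ConvexOn ℝ (univ ×ˢ Ioi 0) Φ) (hW : ∀ F : Mat2, 0 < F.det → W F = Φ (F, F.det)) :
    Polyconvex W :=
  ⟨extendByTop _ Φ, fun x y _ _ ha hb hab ↦ hΦ.extendByTop_le x y ha hb hab,
    fun F hF ↦ by rw [hW F hF, extendByTop_of_mem Φ (by simpa using hF)]⟩

lemma polyconvex_henckyEnergy {k : ℝ} (hk : 1 / 4 ≤ k) : Polyconvex (henckyEnergy k) := by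
  have hratio : ConvexOn ℝ (univ ×ˢ Ioi 0)
      fun p : Mat2 × ℝ ↦ max (maxSingularValue p.1 ^ 2 / p.2) 1 :=
    (convexOn_maxSingularValue.sq_div fun F _ ↦ maxSingularValue_nonneg F).sup
      (convexOn_const 1 (convex_univ.prod (convex_Ioi 0)))
  have hprofile := (convexOn_henckyProfile_iff (by linarith)).2 hk
  refine Polyconvex.of_convexOn (hprofile.comp_of_mapsTo (monotoneOn_henckyProfile (by linarith))
    hratio fun _ _ ↦ mem_Ici.2 (le_max_right _ _)) fun F hF ↦ ?_
  rw [henckyEnergy_eq hF, Function.comp_apply,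
    max_eq_left (one_le_maxSingularValue_sq_div_det hF)]

lemma det_add_smul_vecMulVec (F : Mat2) (ξ η : Fin 2 → ℝ) (t : ℝ) :
    (F + t • vecMulVec ξ η).det = F.det + t * ((F + vecMulVec ξ η).det - F.det) := by
  simp [det_fin_two, vecMulVec_apply]
  ring

lemma Polyconvex.rankOneConvex {W : Mat2 → ℝ} (hW : Polyconvex W) : RankOneConvex W := by
  obtain ⟨P, hP, hPW⟩ := hW
  intro F hF ξ η θ hθ hseg
  set M := vecMulVec ξ η
  have h₁ : 0 < (F + M).det := by simpa using hseg 1 (right_mem_Icc.2 zero_le_one)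
  have hθ' : 0 < (F + (1 - θ) • M).det := hseg _ ⟨by linarith [hθ.2], by linarith [hθ.1]⟩
  -- `det` is affine along rank-one lines, so `(F, det F)` moves along a segment
  have hpair : θ • (F, F.det) + (1 - θ) • (F + M, (F + M).det)
      = (F + (1 - θ) • M, (F + (1 - θ) • M).det) := by
    rw [det_add_smul_vecMulVec, Prod.smul_mk, Prod.smul_mk, Prod.mk_add_mk]
    congr 1
    · module
    · simp only [smul_eq_mul]; ring
  have h := hP (F, F.det) (F + M, (F + M).det) θ (1 - θ) hθ.1 (by linarith [hθ.2]) (by ring)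
  rw [hpair, ← hPW _ hF, ← hPW _ h₁, ← hPW _ hθ'] at h
  exact_mod_cast h

lemma diag2_add_smul_vecMulVec (x y t : ℝ) :
    diag2 x 1 + t • vecMulVec ![1, 0] ![y - x, 0] = diag2 (x + t * (y - x)) 1 := by
  ext i j
  fin_cases i <;> fin_cases j <;> simp [diag2]

lemma RankOneConvex.convexOn_diag2 {W : Mat2 → ℝ} (hW : RankOneConvex W) :
    ConvexOn ℝ (Ioi 0) fun t ↦ W (diag2 t 1) := by
  refine ⟨convex_Ioi 0, fun x hx y hy a b ha hb hab ↦ ?_⟩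
  have hseg : ∀ t ∈ Icc (0 : ℝ) 1, 0 < (diag2 x 1 + t • vecMulVec ![1, 0] ![y - x, 0]).det := by
    intro t ht
    rw [diag2_add_smul_vecMulVec, det_diag2, mul_one]
    exact (convex_Ioi 0).add_smul_sub_mem hx hy ht
  have h := hW (diag2 x 1) (by simpa [det_diag2] using hx) ![1, 0] ![y - x, 0] a
    ⟨ha, by linarith⟩ hseg
  have h₁ := diag2_add_smul_vecMulVec x y 1
  rw [one_smul, one_mul, add_sub_cancel] at h₁
  obtain rfl : b = 1 - a := by linarith
  rw [diag2_add_smul_vecMulVec, h₁] at h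
  simpa only [smul_eq_mul, show x + (1 - a) * (y - x) = a * x + (1 - a) * y by ring] using h

lemma one_fourth_le_of_rankOneConvex_henckyEnergy {k : ℝ} (hk : 0 < k)
    (hW : RankOneConvex (henckyEnergy k)) : 1 / 4 ≤ k :=
  (convexOn_henckyProfile_iff hk).1 <| (hW.convexOn_diag2.subset (Ici_subset_Ioi.2 one_pos)
    (convex_Ici 1)).congr fun _ ht ↦ henckyEnergy_diag2 k ht

/-- for `k > 0`, the exponentiated isochoric Hencky energy
`exp((k/2)·(log(K(F)+√(K(F)²−1)))²) = exp(k‖dev₂ log U‖²)` is rank-one convex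
iff `k ≥ 1/4`, and polyconvex iff `k ≥ 1/4`. -/
theorem exponentiated_hencky_rankOneConvex_polyconvex_iff (k : ℝ) (hk : 0 < k) :
    (RankOneConvex (fun F =>
        Real.exp ((k/2) *
          (Real.log (distortionK F + Real.sqrt ((distortionK F) ^ 2 - 1))) ^ 2)) ↔
      1/4 ≤ k) ∧
    (Polyconvex (fun F =>
        Real.exp ((k/2) *
          (Real.log (distortionK F + Real.sqrt ((distortionK F) ^ 2 - 1))) ^ 2)) ↔
      1/4 ≤ k) := by
  change (RankOneConvex (henckyEnergy k) ↔ _) ∧ (Polyconvex (henckyEnergy k) ↔ _)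
  have necessity := one_fourth_le_of_rankOneConvex_henckyEnergy hk
  exact ⟨⟨necessity, fun h ↦ (polyconvex_henckyEnergy h).rankOneConvex⟩,
    ⟨fun h ↦ necessity h.rankOneConvex, polyconvex_henckyEnergy⟩⟩
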